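/- arXiv:2211.05669 — 5 statements merged into one kernel-verified Lean document; each statement's English description precedes it below -/
import Mathlib

section
/- If (n,d) is a critical pair (i.e., 1 ≤ d ≤ n, gcd(n,d)=1, n even, and d ≡ ±1 modulo every prime power dividing n), and o is the smallest positive integer with o·(d−1) ≡ 0 (mod n), then 2o divides n and 2o divides d+1. -/
def IsCritical (n d : ℕ) : Prop :=
  1 ≤ d ∧ d ≤ n ∧ Nat.gcd n d = 1 ∧ Even n ∧
    ∀ ℓ a : ℕ, ℓ.Prime → ℓ ^ a ∣ n →
      ((d : ℤ) ≡ 1 [ZMOD ((ℓ : ℤ) ^ a)] ∨ (d : ℤ) ≡ -1 [ZMOD ((ℓ : ℤ) ^ a)])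

theorem stmt3 (n d o : ℕ) (hcrit : IsCritical n d) (ho : 0 < o)
    (hdvd : n ∣ o * (d - 1)) (hmin : ∀ m : ℕ, 0 < m → n ∣ m * (d - 1) → o ≤ m) :
    2 * o ∣ n ∧ 2 * o ∣ d + 1 := by
  obtain ⟨hd1, hdn, hgcd, hne, hpp⟩ := hcrit
  have hn0 : 0 < n := lt_of_lt_of_le hd1 hdn
  have h2n : 2 ∣ n := hne.two_dvd
  have hdodd : ¬ 2 ∣ d := by
    intro h2d
    have h := Nat.dvd_gcd h2n h2d
    rw [hgcd] at h
    omega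
  rcases eq_or_lt_of_le hd1 with h1 | h2
  · -- d = 1
    have hle : o ≤ 1 := hmin 1 one_pos (by simp [← h1])
    have ho1 : o = 1 := le_antisymm hle ho
    subst ho1
    rw [← h1]
    exact ⟨by simpa using h2n, by norm_num⟩
  · -- d ≥ 2 (in fact d odd so d ≥ 3)
    set e := d - 1 with he_def
    have he0 : e ≠ 0 := by omega
    have he2 : 2 ∣ e := by omega
    set g := Nat.gcd n e with hg_def
    have hgn : g ∣ n := Nat.gcd_dvd_left n e
    have hge : g ∣ e := Nat.gcd_dvd_right n e
    have hg0 : 0 < g := Nat.gcd_pos_of_pos_left e hn0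
    have hngn : g * (n / g) = n := Nat.mul_div_cancel' hgn
    have hege : g * (e / g) = e := Nat.mul_div_cancel' hge
    have hn'0 : 0 < n / g := Nat.div_pos (Nat.le_of_dvd hn0 hgn) hg0
    -- o = n / g
    have hkey : n ∣ (n / g) * e := by
      refine ⟨e / g, ?_⟩
      conv_lhs => rw [← hege]
      rw [← mul_assoc, Nat.div_mul_cancel hgn]
    have hle : o ≤ n / g := hmin _ hn'0 hkey
    have hdvd' : n / g ∣ o := by
      have hcop : (n / g).Coprime (e / g) := Nat.coprime_div_gcd_div_gcd hg0
      have h1 : g * (n / g) ∣ g * (o * (e / g)) := by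
        rw [hngn]
        have heq : g * (o * (e / g)) = o * e := by
          rw [mul_left_comm g o (e / g), hege]
        rw [heq]
        exact hdvd
      have h2 : n / g ∣ o * (e / g) := (mul_dvd_mul_iff_left hg0.ne').mp h1
      exact hcop.dvd_of_dvd_mul_right h2
    have ho_eq : o = n / g := le_antisymm hle (Nat.le_of_dvd ho hdvd')
    have h2g : 2 ∣ g := Nat.dvd_gcd h2n he2
    have hon : n = g * o := by rw [ho_eq, hngn]
    constructor
    · obtain ⟨g', hg'⟩ := h2g
      exact ⟨g' , by rw [hon, hg']; ring⟩
    · -- 2 * o ∣ d + 1 via factorizations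
      have h2o0 : 2 * o ≠ 0 := by positivity
      have hd10 : (d + 1) ≠ 0 := by omega
      rw [← Nat.factorization_le_iff_dvd h2o0 hd10, Finsupp.le_def]
      intro p
      by_cases hpprime : p.Prime
      swap
      · simp [Nat.factorization_eq_zero_of_not_prime _ hpprime]
      by_cases hpn : p ∣ n
      swap
      · have : ¬ p ∣ 2 * o := by
          intro h
          rcases (Nat.Prime.dvd_mul hpprime).mp h with h' | h'
          · exact hpn (h'.trans h2n)
          · have hodvdn : o ∣ n := ⟨g, by rw [hon, mul_comm]⟩
            exact hpn (h'.trans hodvdn)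
        simp [Nat.factorization_eq_zero_of_not_dvd this]
      -- main case
      set a := n.factorization p with ha_def
      have ha1 : 1 ≤ a := (Nat.Prime.factorization_pos_of_dvd hpprime hn0.ne' hpn)
      have hpa : p ^ a ∣ n := Nat.ordProj_dvd n p
      -- factorization of 2 * o at p
      have hofact : o.factorization p = a - min a (e.factorization p) := by
        rw [ho_eq, Nat.factorization_div hgn]
        simp only [Finsupp.tsub_apply]
        rw [hg_def, Nat.factorization_gcd hn0.ne' he0]
        simp [Finsupp.inf_apply, ← ha_def]
      have h2ofact : (2 * o).factorization p
          = (2 : ℕ).factorization p + o.factorization p := by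
        rw [Nat.factorization_mul (by norm_num) ho.ne']
        simp
      have h2d1 : (2:ℕ) ∣ d + 1 := by omega
      rcases hpp p a hpprime hpa with h | h
      · -- d ≡ 1 : p ^ a ∣ e
        have hdvde : (p : ℤ) ^ a ∣ (d : ℤ) - 1 := by
          have h' := h.dvd
          rw [show (d : ℤ) - 1 = -(1 - (d : ℤ)) by ring]
          exact dvd_neg.mpr h'

        have hpe : p ^ a ∣ e := by
          have : ((p ^ a : ℕ) : ℤ) ∣ ((e : ℕ) : ℤ) := by
            push_cast [he_def, Nat.cast_sub hd1]
            exact hdvde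
          exact_mod_cast this
        have hva : a ≤ e.factorization p :=
          (Nat.Prime.pow_dvd_iff_le_factorization hpprime he0).mp hpe
        have ho0 : o.factorization p = 0 := by
          rw [hofact, min_eq_left hva]; omega
        rw [h2ofact, ho0]
        by_cases hp2 : p = 2
        · subst hp2
          have h1d : 1 ≤ (d+1).factorization 2 :=
            (Nat.Prime.pow_dvd_iff_le_factorization Nat.prime_two hd10).mp
              (by simpa using h2d1)
          have h21 : (2:ℕ).factorization 2 = 1 := by
            rw [Nat.Prime.factorization Nat.prime_two]; simp
          rw [h21]
          omega
        · have h20 : (2:ℕ).factorization p = 0 := by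
            rw [Nat.Prime.factorization Nat.prime_two, Finsupp.single_apply,
              if_neg (fun hq => hp2 hq.symm)]
          simp [h20]
      · -- d ≡ -1 : p ^ a ∣ d + 1
        have hdvdd : (p : ℤ) ^ a ∣ (d : ℤ) + 1 := by
          have h' := h.dvd
          rw [show (d : ℤ) + 1 = -(-1 - (d : ℤ)) by ring]
          exact dvd_neg.mpr h'

        have hpd : p ^ a ∣ d + 1 := by
          have : ((p ^ a : ℕ) : ℤ) ∣ ((d + 1 : ℕ) : ℤ) := by push_cast; exact hdvdd
          exact_mod_cast this
        have hva : a ≤ (d + 1).factorization p :=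
          (Nat.Prime.pow_dvd_iff_le_factorization hpprime hd10).mp hpd
        rw [h2ofact, hofact]
        by_cases hp2 : p = 2
        · subst hp2
          have hev : 1 ≤ e.factorization 2 :=
            (Nat.Prime.pow_dvd_iff_le_factorization Nat.prime_two he0).mp
              (by simpa using he2)
          have h21 : (2:ℕ).factorization 2 = 1 := by
            rw [Nat.Prime.factorization Nat.prime_two]; simp
          rw [h21]
          omega
        · have h20 : (2:ℕ).factorization p = 0 := by
            rw [Nat.Prime.factorization Nat.prime_two, Finsupp.single_apply,
              if_neg (fun hq => hp2 hq.symm)]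
          rw [h20]
          omega
end

section
/- Let 1 ≤ d ≤ n with gcd(n,d)=1 and let 1 ≤ b ≤ n be such that bd ≡ 1 (mod n). If the Hirzebruch–Jung expansion of n/d is (a₀, a₁, …, a_r), then the Hirzebruch–Jung expansion of n/b is (a_r, …, a₁, a₀). Consequently, the expansion of n/d is symmetric (a_i = a_{r−i} for all i) if and only if d² ≡ 1 (mod n). -/
def hjEval : List ℕ → ℚ
  | [] => 0
  | a :: l => (a : ℚ) - 1 / hjEval l

def IsHJExpansion (n d : ℕ) (L : List ℕ) : Prop :=
  L ≠ [] ∧ (∀ x ∈ L, 2 ≤ x) ∧ hjEval L = (n : ℚ) / (d : ℚ)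

/-!
Write `[a₀, …, a_r]` through the product `M = ∏ [[aᵢ, -1], [1, 0]]`: its first column `(p, q)`
satisfies `hjEval = p / q` with `0 < q < p`, and `det M = 1` makes `p, q` coprime, so
`(p, q) = (n, d)`. Reversing the list transposes `M` up to conjugation by `diag(1, -1)`, so the
reversed expansion evaluates to `p / u` with `u = -M₀₁`; now `det M = 1` reads `u d ≡ 1 (mod n)`
and `0 < u < n`, forcing `u = b`. Symmetry is then a matter of uniqueness of the expansion, whose
leading entry is the ceiling of its value.
-/

def hjStep (a : ℕ) : Matrix (Fin 2) (Fin 2) ℤ := !![(a : ℤ), -1; 1, 0]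

def hjMatrix (L : List ℕ) : Matrix (Fin 2) (Fin 2) ℤ := (L.map hjStep).prod

@[simp]
lemma hjMatrix_nil : hjMatrix [] = 1 := rfl

lemma hjMatrix_cons (a : ℕ) (l : List ℕ) : hjMatrix (a :: l) = hjStep a * hjMatrix l := rfl

@[simp]
lemma hjMatrix_cons_zero_zero (a : ℕ) (l : List ℕ) :
    hjMatrix (a :: l) 0 0 = a * hjMatrix l 0 0 - hjMatrix l 1 0 := by
  simp [hjMatrix_cons, hjStep, Matrix.mul_apply, Fin.sum_univ_two, sub_eq_add_neg]

@[simp]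
lemma hjMatrix_cons_one_zero (a : ℕ) (l : List ℕ) :
    hjMatrix (a :: l) 1 0 = hjMatrix l 0 0 := by
  simp [hjMatrix_cons, hjStep, Matrix.mul_apply, Fin.sum_univ_two]

lemma hjMatrix_append_singleton (l : List ℕ) (a : ℕ) :
    hjMatrix (l ++ [a]) = hjMatrix l * hjStep a := by
  simp [hjMatrix]

lemma det_hjMatrix (L : List ℕ) : (hjMatrix L).det = 1 := by
  induction L with
  | nil => simp
  | cons a l ih =>
    rw [hjMatrix_cons, Matrix.det_mul, ih, hjStep, Matrix.det_fin_two_of]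
    simp

lemma hjMatrix_reverse (L : List ℕ) :
    hjMatrix L.reverse =
      !![hjMatrix L 0 0, -hjMatrix L 1 0; -hjMatrix L 0 1, hjMatrix L 1 1] := by
  induction L with
  | nil => exact Matrix.one_fin_two.trans (by simp)
  | cons a l ih =>
    rw [List.reverse_cons, hjMatrix_append_singleton, ih, hjMatrix_cons]
    ext i j
    fin_cases i <;> fin_cases j <;> simp [hjStep, Matrix.mul_apply, Fin.sum_univ_two] <;> ring

@[simp]
lemma hjMatrix_reverse_zero_zero (L : List ℕ) : hjMatrix L.reverse 0 0 = hjMatrix L 0 0 := by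
  simp [hjMatrix_reverse]

@[simp]
lemma hjMatrix_reverse_one_zero (L : List ℕ) : hjMatrix L.reverse 1 0 = -hjMatrix L 0 1 := by
  simp [hjMatrix_reverse]

lemma hjMatrix_one_zero_lt_zero_zero {L : List ℕ} (hL : ∀ x ∈ L, 2 ≤ x) :
    0 ≤ hjMatrix L 1 0 ∧ hjMatrix L 1 0 < hjMatrix L 0 0 := by
  induction L with
  | nil => simp
  | cons a l ih =>
    obtain ⟨hq, hqp⟩ := ih fun x hx => hL x (List.mem_cons_of_mem a hx)
    have ha : (2 : ℤ) ≤ a := by exact_mod_cast hL a List.mem_cons_self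
    simp only [hjMatrix_cons_zero_zero, hjMatrix_cons_one_zero]
    constructor <;> nlinarith

lemma hjMatrix_one_zero_pos {L : List ℕ} (hL : ∀ x ∈ L, 2 ≤ x) (hne : L ≠ []) :
    0 < hjMatrix L 1 0 := by
  obtain ⟨a, l, rfl⟩ := List.exists_cons_of_ne_nil hne
  obtain ⟨hq, hqp⟩ := hjMatrix_one_zero_lt_zero_zero fun x hx => hL x (List.mem_cons_of_mem a hx)
  rw [hjMatrix_cons_one_zero]
  exact hq.trans_lt hqp

lemma hjEval_eq_div {L : List ℕ} (hL : ∀ x ∈ L, 2 ≤ x) :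
    hjEval L = (hjMatrix L 0 0 : ℚ) / hjMatrix L 1 0 := by
  induction L with
  | nil => simp [hjEval]
  | cons a l ih =>
    have hl : ∀ x ∈ l, 2 ≤ x := fun x hx => hL x (List.mem_cons_of_mem a hx)
    have hp : (hjMatrix l 0 0 : ℚ) ≠ 0 := by
      obtain ⟨hq, hqp⟩ := hjMatrix_one_zero_lt_zero_zero hl
      exact_mod_cast (hq.trans_lt hqp).ne'
    rw [hjEval, ih hl, hjMatrix_cons_zero_zero, hjMatrix_cons_one_zero]
    push_cast
    field_simp

lemma one_lt_hjEval {L : List ℕ} (hL : ∀ x ∈ L, 2 ≤ x) (hne : L ≠ []) : 1 < hjEval L := by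
  have hq := hjMatrix_one_zero_pos hL hne
  have hqp := (hjMatrix_one_zero_lt_zero_zero hL).2
  rw [hjEval_eq_div hL, one_lt_div (by exact_mod_cast hq)]
  exact_mod_cast hqp

lemma ceil_hjEval_cons {a : ℕ} {l : List ℕ} (hL : ∀ x ∈ a :: l, 2 ≤ x) :
    ⌈hjEval (a :: l)⌉ = a := by
  have htail : 0 ≤ 1 / hjEval l ∧ 1 / hjEval l < 1 := by
    rcases eq_or_ne l [] with rfl | hne
    · simp [hjEval]
    · have := one_lt_hjEval (fun x hx => hL x (List.mem_cons_of_mem a hx)) hne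
      exact ⟨by positivity, (div_lt_one (by positivity)).mpr this⟩
  rw [Int.ceil_eq_iff, hjEval]
  push_cast
  constructor <;> linarith

lemma hjEval_injOn : Set.InjOn hjEval {L | ∀ x ∈ L, 2 ≤ x} := by
  intro L₁ h₁ L₂ h₂ he
  induction L₁ generalizing L₂ with
  | nil =>
    cases L₂ with
    | nil => rfl
    | cons c m =>
      have := one_lt_hjEval h₂ (List.cons_ne_nil c m)
      rw [← he] at this
      norm_num [hjEval] at this
  | cons a l ih =>
    cases L₂ with
    | nil =>
      have := one_lt_hjEval h₁ (List.cons_ne_nil a l)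
      rw [he] at this
      norm_num [hjEval] at this
    | cons c m =>
      have hac : a = c := by
        have := (ceil_hjEval_cons h₁).symm.trans (he ▸ ceil_hjEval_cons h₂)
        exact_mod_cast this
      subst hac
      have htail : hjEval l = hjEval m := by simpa [hjEval] using he
      rw [ih (fun x hx => h₁ x (List.mem_cons_of_mem a hx))
        (fun x hx => h₂ x (List.mem_cons_of_mem a hx)) htail]

lemma Nat.eq_of_mul_modEq_one {n d a b : ℕ} (ha : a * d ≡ 1 [MOD n]) (hb : b * d ≡ 1 [MOD n])
    (ha0 : 0 < a) (han : a ≤ n) (hb0 : 0 < b) (hbn : b ≤ n) : a = b := by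
  have hab : a ≡ b [MOD n] :=
    calc a = a * 1 := (mul_one a).symm
      _ ≡ a * (b * d) [MOD n] := hb.symm.mul_left a
      _ = a * d * b := by ring
      _ ≡ 1 * b [MOD n] := ha.mul_right b
      _ = b := one_mul b
  exact hab.eq_of_abs_lt (by rw [abs_lt]; constructor <;> omega)

section Expansion

variable {n d : ℕ} {L : List ℕ}

lemma IsHJExpansion.hjMatrix_col_eq (hL : IsHJExpansion n d L) (hd : 0 < d)
    (hnd : n.gcd d = 1) : hjMatrix L 0 0 = n ∧ hjMatrix L 1 0 = d := by
  obtain ⟨hne, h2, hval⟩ := hL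
  have hcop : IsCoprime (hjMatrix L 0 0) (hjMatrix L 1 0) :=
    ⟨hjMatrix L 1 1, -hjMatrix L 0 1, by
      linear_combination (Matrix.det_fin_two (hjMatrix L)).symm.trans (det_hjMatrix L)⟩
  refine Rat.div_int_inj (hjMatrix_one_zero_pos h2 hne) (by exact_mod_cast hd)
    (Int.isCoprime_iff_gcd_eq_one.mp hcop) hnd ?_
  rw [← hjEval_eq_div h2, hval]
  push_cast
  rfl

lemma IsHJExpansion.hjMatrix_zero_one_eq (hL : IsHJExpansion n d L) (hd : 0 < d)
    (hnd : n.gcd d = 1) {b : ℕ} (hbd : b * d ≡ 1 [MOD n]) (hb : 0 < b) (hbn : b ≤ n) :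
    hjMatrix L 0 1 = -b := by
  obtain ⟨hp, hq⟩ := hL.hjMatrix_col_eq hd hnd
  have h2 : ∀ x ∈ L.reverse, 2 ≤ x := by simpa using hL.2.1
  have hu : 0 < -hjMatrix L 0 1 := by simpa using hjMatrix_one_zero_pos h2 (by simpa using hL.1)
  have hun : -hjMatrix L 0 1 < n := by simpa [hp] using (hjMatrix_one_zero_lt_zero_zero h2).2
  obtain ⟨u, hu_eq⟩ := Int.eq_ofNat_of_zero_le hu.le
  have hdet : n * hjMatrix L 1 1 + u * d = 1 := by
    rw [← hp, ← hq, ← hu_eq, ← det_hjMatrix L, Matrix.det_fin_two]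
    ring
  have hud : u * d ≡ 1 [MOD n] :=
    Int.natCast_modEq_iff.mp (Int.modEq_iff_dvd.mpr ⟨hjMatrix L 1 1, by push_cast; linarith⟩)
  rw [← neg_neg (hjMatrix L 0 1), hu_eq,
    Nat.eq_of_mul_modEq_one hud hbd (by omega) (by omega) hb hbn]

lemma IsHJExpansion.reverse (hL : IsHJExpansion n d L) (hd : 0 < d)
    (hnd : n.gcd d = 1) {b : ℕ} (hbd : b * d ≡ 1 [MOD n]) (hb : 0 < b) (hbn : b ≤ n) :
    IsHJExpansion n b L.reverse := by
  have h2 : ∀ x ∈ L.reverse, 2 ≤ x := by simpa using hL.2.1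
  refine ⟨by simpa using hL.1, h2, ?_⟩
  rw [hjEval_eq_div h2, hjMatrix_reverse_zero_zero, hjMatrix_reverse_one_zero,
    hL.hjMatrix_zero_one_eq hd hnd hbd hb hbn, (hL.hjMatrix_col_eq hd hnd).1]
  simp

end Expansion

theorem stmt11 (n d b : ℕ) (hd1 : 1 ≤ d) (hdn : d ≤ n) (hg : Nat.gcd n d = 1)
    (hb1 : 1 ≤ b) (hbn : b ≤ n) (hbd : b * d ≡ 1 [MOD n])
    (L : List ℕ) (hL : IsHJExpansion n d L) :
    IsHJExpansion n b L.reverse ∧ (L.reverse = L ↔ d ^ 2 ≡ 1 [MOD n]) := by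
  have hrev := hL.reverse hd1 hg hbd hb1 hbn
  refine ⟨hrev, fun hsymm => ?_, fun hsq => ?_⟩
  · have hbd_eq : (b : ℤ) = d := by
      rw [← neg_neg (b : ℤ), ← hL.hjMatrix_zero_one_eq hd1 hg hbd hb1 hbn,
        ← hjMatrix_reverse_one_zero, hsymm, (hL.hjMatrix_col_eq hd1 hg).2]
    obtain rfl : b = d := by exact_mod_cast hbd_eq
    rwa [sq]
  · obtain rfl : d = b := Nat.eq_of_mul_modEq_one (by rwa [sq] at hsq) hbd hd1 hdn hb1 hbn
    exact hjEval_injOn hrev.2.1 hL.2.1 (hrev.2.2.trans hL.2.2.symm)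
end

section
/- Let q' be an odd positive integer coprime to 3. Then gcd(6q', 3+4q') = 1 and gcd(6q', 3+2q') = 1; moreover (3+4q')² ≡ (3+2q')² (mod 6q'). If d is the multiplicative inverse of 3+4q' modulo 6q', then (6q', e) is a critical pair, where e is the residue of d·(3+2q') modulo 6q' taken in [1, 6q']. -/
theorem Int.modEq_one_or_neg_one_of_sq_modEq_one {ℓ a : ℕ} {x : ℤ} (hℓ : ℓ.Prime)
    (h4 : ¬ 4 ∣ ℓ ^ a) (hx : x ^ 2 ≡ 1 [ZMOD ℓ ^ a]) :
    x ≡ 1 [ZMOD ℓ ^ a] ∨ x ≡ -1 [ZMOD ℓ ^ a] := by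
  have hprime : Prime (ℓ : ℤ) := Nat.prime_iff_prime_int.mp hℓ
  have hprod : (ℓ : ℤ) ^ a ∣ (x - 1) * (x + 1) := by
    convert hx.symm.dvd using 1
    ring
  rw [Int.modEq_comm, Int.modEq_iff_dvd, Int.modEq_comm, Int.modEq_iff_dvd, sub_neg_eq_add]
  by_cases hsub : (ℓ : ℤ) ∣ x - 1
  · by_cases hadd : (ℓ : ℤ) ∣ x + 1
    · have hℓ2 : ℓ = 2 := by
        have h : (ℓ : ℤ) ∣ 2 := by simpa using dvd_sub hadd hsub
        exact (Nat.prime_dvd_prime_iff_eq hℓ Nat.prime_two).mp (by exact_mod_cast h)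
      have ha : a ≤ 1 := by
        by_contra! ha
        exact h4 (hℓ2 ▸ pow_dvd_pow 2 ha)
      exact .inl ((pow_dvd_pow _ ha).trans (by simpa using hsub))
    · exact .inl (hprime.pow_dvd_of_dvd_mul_right a hadd hprod)
  · exact .inr (hprime.pow_dvd_of_dvd_mul_left a hsub hprod)

theorem isCritical_of_sq_modEq_one {n e : ℕ} (he1 : 1 ≤ e) (he2 : e ≤ n) (hn : Even n)
    (h4 : ¬ 4 ∣ n) (he : e ^ 2 ≡ 1 [MOD n]) : IsCritical n e := by
  refine ⟨he1, he2, (Nat.coprime_of_mul_modEq_one e (by rwa [← sq])).symm, hn, ?_⟩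
  intro ℓ a hℓ hdvd
  refine Int.modEq_one_or_neg_one_of_sq_modEq_one hℓ (fun h ↦ h4 (h.trans hdvd)) ?_
  have he' : (e : ℤ) ^ 2 ≡ 1 [ZMOD (n : ℤ)] := by exact_mod_cast Int.natCast_modEq_iff.mpr he
  exact he'.of_dvd (by exact_mod_cast hdvd)

theorem Nat.coprime_six_mul_three_add_two_mul_mul {q k : ℕ} (hq : q.Coprime 3)
    (hk : k.Coprime 3) : (6 * q).Coprime (3 + 2 * k * q) := by
  have h2 : Nat.Coprime 2 (3 + 2 * k * q) := by
    rw [show 3 + 2 * k * q = 3 + (k * q) * 2 by ring, Nat.coprime_add_mul_right_right]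
    decide
  have h3 : Nat.Coprime 3 (3 + 2 * k * q) := by
    rw [show 3 + 2 * k * q = 2 * k * q + 1 * 3 by ring, Nat.coprime_add_mul_right_right]
    exact (Nat.Coprime.mul_right (by decide) hk.symm).mul_right hq.symm
  have hq' : Nat.Coprime q (3 + 2 * k * q) := by
    rwa [show 3 + 2 * k * q = 3 + (2 * k) * q by ring, Nat.coprime_add_mul_right_right]
  rw [show 6 * q = 2 * 3 * q by ring]
  exact (h2.mul_left h3).mul_left hq'

theorem Nat.sq_modEq_one_of_mul_modEq_one_of_sq_modEq_sq {n a b d : ℕ}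
    (hd : d * a ≡ 1 [MOD n]) (hab : a ^ 2 ≡ b ^ 2 [MOD n]) : (d * b) ^ 2 ≡ 1 [MOD n] :=
  calc (d * b) ^ 2 = d ^ 2 * b ^ 2 := mul_pow d b 2
    _ ≡ d ^ 2 * a ^ 2 [MOD n] := hab.symm.mul_left _
    _ = (d * a) ^ 2 := (mul_pow d a 2).symm
    _ ≡ 1 ^ 2 [MOD n] := hd.pow 2
    _ = 1 := one_pow 2

theorem stmt12_general (q : ℕ) (hodd : Odd q) (h3 : Nat.Coprime q 3)
    (d : ℕ) (hd : d * (3 + 4 * q) ≡ 1 [MOD 6 * q])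
    (e : ℕ) (he1 : 1 ≤ e) (he2 : e ≤ 6 * q) (hee : e ≡ d * (3 + 2 * q) [MOD 6 * q]) :
    Nat.gcd (6 * q) (3 + 4 * q) = 1 ∧ Nat.gcd (6 * q) (3 + 2 * q) = 1 ∧
      (3 + 4 * q) ^ 2 ≡ (3 + 2 * q) ^ 2 [MOD 6 * q] ∧
      IsCritical (6 * q) e := by
  have hcop₄ : Nat.Coprime (6 * q) (3 + 2 * 2 * q) :=
    Nat.coprime_six_mul_three_add_two_mul_mul h3 (by decide)
  have hcop₂ : Nat.Coprime (6 * q) (3 + 2 * 1 * q) :=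
    Nat.coprime_six_mul_three_add_two_mul_mul h3 (by decide)
  have hsq : (3 + 4 * q) ^ 2 ≡ (3 + 2 * q) ^ 2 [MOD 6 * q] := by
    rw [show (3 + 4 * q) ^ 2 = (3 + 2 * q) ^ 2 + 6 * q * (2 + 2 * q) by ring]
    exact Nat.add_mul_mod_self_left _ _ _
  have hnot4 : ¬ 4 ∣ 6 * q := by
    obtain ⟨m, rfl⟩ := hodd
    omega
  refine ⟨by simpa using hcop₄, by simpa using hcop₂, hsq,
    isCritical_of_sq_modEq_one he1 he2 ⟨3 * q, by ring⟩ hnot4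
      ((hee.pow 2).trans (Nat.sq_modEq_one_of_mul_modEq_one_of_sq_modEq_sq hd hsq))⟩

theorem stmt12 (q : ℕ) (hq : 0 < q) (hodd : Odd q) (h3 : Nat.Coprime q 3)
    (d : ℕ) (hd : d * (3 + 4 * q) ≡ 1 [MOD 6 * q])
    (e : ℕ) (he1 : 1 ≤ e) (he2 : e ≤ 6 * q) (hee : e ≡ d * (3 + 2 * q) [MOD 6 * q]) :
    Nat.gcd (6 * q) (3 + 4 * q) = 1 ∧ Nat.gcd (6 * q) (3 + 2 * q) = 1 ∧
      (3 + 4 * q) ^ 2 ≡ (3 + 2 * q) ^ 2 [MOD 6 * q] ∧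
      IsCritical (6 * q) e :=
  stmt12_general q hodd h3 d hd e he1 he2 hee
end

section
/- Let q be a positive integer with 12 | q and write q' = q/12. Then the pair (4q', 1+2q') is a critical pair if and only if q' is odd. -/
/-!
Write `n = 4k` and `d = 1 + 2k`, so that `d - 1 = 2k` and `d + 1 = 2(k + 1)`.
If `k` is odd, the prime powers dividing `4k` divide either `4`, where `d ≡ -1 (mod 4)`,
or `k`, where `d ≡ 1`. If `k = 2^v m` is even with `m` odd, then `d ≡ 1 (mod 4)` forces the
sign `+1` modulo `2^(v+2) ∣ 4k`, but `2^(v+2)` does not divide `d - 1 = 2^(v+1) m`.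
-/

theorem Nat.Prime.pow_dvd_or_pow_dvd_of_coprime {ℓ a m n : ℕ} (hℓ : ℓ.Prime)
    (hmn : m.Coprime n) (h : ℓ ^ a ∣ m * n) : ℓ ^ a ∣ m ∨ ℓ ^ a ∣ n := by
  by_cases hℓn : ℓ ∣ n
  · exact .inr (((Nat.Coprime.coprime_dvd_left hℓn hmn.symm).pow_left a).dvd_of_dvd_mul_left h)
  · exact .inl (((hℓ.coprime_iff_not_dvd).2 hℓn |>.pow_left a).dvd_of_dvd_mul_right h)

theorem coprime_four_mul_one_add_two_mul (k : ℕ) : Nat.Coprime (4 * k) (1 + 2 * k) :=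
  Nat.isCoprime_iff_coprime.mp ⟨-(1 + k), 1 + 2 * k, by push_cast; ring⟩

theorem IsCritical.modEq_one_of_two_pow_dvd {n d a : ℕ} (h : IsCritical n d) (ha : 2 ≤ a)
    (hdvd : 2 ^ a ∣ n) (hd : (d : ℤ) ≡ 1 [ZMOD 4]) : (d : ℤ) ≡ 1 [ZMOD 2 ^ a] := by
  refine (h.2.2.2.2 2 a Nat.prime_two hdvd).resolve_right fun hneg ↦ ?_
  have h4 : (4 : ℤ) ∣ 2 ^ a := by
    simpa using pow_dvd_pow (2 : ℤ) ha
  exact absurd (hd.symm.trans (hneg.of_dvd h4)) (by decide : ¬(1 : ℤ) ≡ -1 [ZMOD 4])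

theorem isCritical_of_odd {k : ℕ} (hk : Odd k) : IsCritical (4 * k) (1 + 2 * k) := by
  obtain ⟨m, rfl⟩ := hk
  refine ⟨by omega, by omega, coprime_four_mul_one_add_two_mul _, ⟨2 * (2 * m + 1), by ring⟩,
    fun ℓ a hℓ hdvd ↦ ?_⟩
  have h4k : Nat.Coprime 4 (2 * m + 1) :=
    Nat.isCoprime_iff_coprime.mp ⟨-(m * m + m), 2 * m + 1, by push_cast; ring⟩
  rcases hℓ.pow_dvd_or_pow_dvd_of_coprime h4k hdvd with hdvd4 | hdvdk
  · refine .inr (Int.ModEq.of_dvd (by exact_mod_cast hdvd4 : (ℓ : ℤ) ^ a ∣ 4) ?_)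
    exact (Int.modEq_iff_dvd.mpr ⟨m + 1, by push_cast; ring⟩).symm
  · refine .inl (Int.ModEq.of_dvd (by exact_mod_cast hdvdk : (ℓ : ℤ) ^ a ∣ 2 * m + 1) ?_)
    exact (Int.modEq_iff_dvd.mpr ⟨2, by push_cast; ring⟩).symm

theorem IsCritical.odd {k : ℕ} (h : IsCritical (4 * k) (1 + 2 * k)) : Odd k := by
  by_contra hodd
  have hk0 : k ≠ 0 := by
    rintro rfl
    exact absurd h.2.1 (by norm_num)
  obtain ⟨v, m, hm, rfl⟩ := Nat.exists_eq_two_pow_mul_odd hk0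
  obtain ⟨j, hj⟩ := Nat.not_odd_iff_even.mp hodd
  have hd : ((1 + 2 * (2 ^ v * m) : ℕ) : ℤ) ≡ 1 [ZMOD 4] :=
    (Int.modEq_iff_dvd.mpr ⟨j, by push_cast [hj]; ring⟩).symm
  have hdvd : 2 ^ (v + 2) ∣ 4 * (2 ^ v * m) := ⟨m, by ring⟩
  have h2m : (2 : ℤ) ^ (v + 1) * 2 ∣ 2 ^ (v + 1) * m := by
    have := (Int.modEq_iff_dvd.mp (h.modEq_one_of_two_pow_dvd (by omega) hdvd hd).symm)
    convert this using 1 <;> push_cast <;> ring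
  have htwo_dvd : (2 : ℤ) ∣ m := (mul_dvd_mul_iff_left (by positivity)).mp h2m
  exact (Int.not_even_iff_odd.mpr (by exact_mod_cast hm)) (even_iff_two_dvd.mpr htwo_dvd)

theorem isCritical_four_mul_iff (k : ℕ) : IsCritical (4 * k) (1 + 2 * k) ↔ Odd k :=
  ⟨IsCritical.odd, isCritical_of_odd⟩

theorem stmt14_general (q : ℕ) :
    IsCritical (4 * (q / 12)) (1 + 2 * (q / 12)) ↔ Odd (q / 12) :=
  isCritical_four_mul_iff (q / 12)

theorem stmt14 (q : ℕ) (hq : 0 < q) (h12 : 12 ∣ q) :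
    IsCritical (4 * (q / 12)) (1 + 2 * (q / 12)) ↔ Odd (q / 12) :=
  stmt14_general q
end

section
/- Let G ⊆ GL₂(K) be a finite abelian subgroup of diagonal matrices over an algebraically closed field K of characteristic zero, isomorphic to C_a × C_{ab}. Then the subgroup of G generated by pseudoreflections (elements fixing a hyperplane pointwise, i.e., diagonal matrices with at least one eigenvalue equal to 1) contains the subgroup C_a × C_a of all diagonal matrices in GL₂(K) whose order divides a and which lie in G; consequently the index of the pseudoreflection subgroup of G divides b. -/
/-! Every element of `G` is `diag(x, y)` with `x, y ∈ Kˣ`. The `a`-torsion of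
`C_a × C_{ab}` has `a²` elements, as many as the group `μ_a × μ_a` of all diagonal matrices
of exponent `a` (`K` has `a` distinct `a`-th roots of unity), so `G` contains all of them.
Each `diag(x, y)` with `x^a = y^a = 1` is the product of `diag(x, 1)` and `diag(1, y)`, which
are trivial or pseudoreflections in `G`. Hence the pseudoreflection subgroup contains `μ_a × μ_a`,
whose index in `G` is `a²b / a² = b`. -/

/-- A pseudoreflection in `GL₂(K)`: a nonidentity element fixing a line
(= hyperplane in dimension 2) pointwise. -/
def IsPseudoreflection {K : Type*} [Field K] (g : GL (Fin 2) K) : Prop :=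
  g ≠ 1 ∧ ∃ v : Fin 2 → K, v ≠ 0 ∧ Matrix.mulVec (g : Matrix (Fin 2) (Fin 2) K) v = v

namespace Matrix

variable (n R : Type*) [Fintype n] [DecidableEq n] [CommRing R]

def diagonalUnits : (n → Rˣ) →* GL n R :=
  (Units.map (diagonalRingHom n R).toMonoidHom).comp MulEquiv.piUnits.symm.toMonoidHom

variable {n R}

@[simp]
lemma val_diagonalUnits (d : n → Rˣ) :
    (diagonalUnits n R d : Matrix n n R) = diagonal fun i => (d i : R) := rfl

lemma diagonalUnits_injective : Function.Injective (diagonalUnits n R) := by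
  intro d e h
  funext i
  ext
  simpa using congrArg (fun g : GL n R => (g : Matrix n n R) i i) h

lemma mem_range_diagonalUnits {g : GL n R} (hg : (g : Matrix n n R).IsDiag) :
    g ∈ (diagonalUnits n R).range := by
  have hunit : IsUnit (g : Matrix n n R).diag :=
    isUnit_diagonal.mp (hg.diagonal_diag.symm ▸ g.isUnit)
  rw [Pi.isUnit_iff] at hunit
  exact ⟨fun i => (hunit i).unit, Units.ext hg.diagonal_diag⟩

end Matrix

section Torsion

variable {M N : Type*} [CommGroup M] [CommGroup N]

lemma MulEquiv.card_powMonoidHom_ker (e : M ≃* N) (n : ℕ) :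
    Nat.card (powMonoidHom n : M →* M).ker = Nat.card (powMonoidHom n : N →* N).ker :=
  Nat.card_congr <| e.toEquiv.subtypeEquiv fun x => by
    simp [MonoidHom.mem_ker, ← map_pow]

lemma card_powMonoidHom_ker_prod (n : ℕ) :
    Nat.card (powMonoidHom n : M × N →* M × N).ker =
      Nat.card (powMonoidHom n : M →* M).ker * Nat.card (powMonoidHom n : N →* N).ker := by
  rw [show (powMonoidHom n : M × N →* M × N) = (powMonoidHom n).prodMap (powMonoidHom n) from rfl,
    MonoidHom.ker_prodMap, Nat.card_congr (Subgroup.prodEquiv _ _).toEquiv, Nat.card_prod]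

lemma card_powMonoidHom_ker_pi (ι : Type*) [Fintype ι] (n : ℕ) :
    Nat.card (powMonoidHom n : (ι → M) →* (ι → M)).ker =
      Nat.card (powMonoidHom n : M →* M).ker ^ Fintype.card ι := by
  rw [← Nat.card_eq_fintype_card, ← Nat.card_fun]
  exact Nat.card_congr <| (Equiv.subtypeEquivRight fun x => by
    simp [MonoidHom.mem_ker, funext_iff]).trans (Equiv.subtypePiEquivPi (p := fun _ y => y ^ n = 1))

lemma powMonoidHom_ker_le_of_card_eq (D : Subgroup M) (n : ℕ)
    [Finite (powMonoidHom n : M →* M).ker]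
    (h : Nat.card (powMonoidHom n : D →* D).ker = Nat.card (powMonoidHom n : M →* M).ker) :
    (powMonoidHom n : M →* M).ker ≤ D := by
  have hle : (powMonoidHom n : D →* D).ker.map D.subtype ≤ (powMonoidHom n : M →* M).ker := by
    rintro _ ⟨x, hx, rfl⟩
    simpa [MonoidHom.mem_ker] using congrArg Subtype.val hx
  rw [← Subgroup.eq_of_le_of_card_ge hle
    (by rw [Subgroup.card_map_of_injective D.subtype_injective, h])]
  exact Subgroup.map_subtype_le _

end Torsion

lemma card_powMonoidHom_ker_zmod (n d : ℕ) [NeZero n] :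
    Nat.card (powMonoidHom d : Multiplicative (ZMod n) →* Multiplicative (ZMod n)).ker =
      n.gcd d := by
  rw [IsCyclic.card_powMonoidHom_ker, Nat.card_congr Multiplicative.toAdd, Nat.card_zmod]

lemma card_powMonoidHom_ker_units_pi (K ι : Type*) [CommMonoid K] [Fintype ι] (n : ℕ) [NeZero n]
    [HasEnoughRootsOfUnity K n] :
    Nat.card (powMonoidHom n : (ι → Kˣ) →* (ι → Kˣ)).ker = n ^ Fintype.card ι := by
  rw [card_powMonoidHom_ker_pi]
  exact congrArg (· ^ _) (HasEnoughRootsOfUnity.natCard_rootsOfUnity K n)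

lemma isPseudoreflection_diagonalUnits_mulSingle {K : Type*} [Field K] (i : Fin 2) {u : Kˣ}
    (hu : u ≠ 1) : IsPseudoreflection (Matrix.diagonalUnits (Fin 2) K (Pi.mulSingle i u)) := by
  obtain ⟨j, hji⟩ := exists_ne i
  refine ⟨?_, Pi.single j 1, by simp, ?_⟩
  · rw [← map_one (Matrix.diagonalUnits (Fin 2) K), Matrix.diagonalUnits_injective.ne_iff]
    simpa using hu
  · simp [Pi.mulSingle_eq_of_ne hji]

lemma diagonalUnits_mem_closure_pseudoreflection {K : Type*} [Field K]
    (G : Subgroup (GL (Fin 2) K)) {d : Fin 2 → Kˣ}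
    (hd : ∀ i, Matrix.diagonalUnits (Fin 2) K (Pi.mulSingle i (d i)) ∈ G) :
    Matrix.diagonalUnits (Fin 2) K d ∈
      Subgroup.closure {g : GL (Fin 2) K | g ∈ G ∧ IsPseudoreflection g} := by
  have hmem : ∀ i, Matrix.diagonalUnits (Fin 2) K (Pi.mulSingle i (d i)) ∈
      Subgroup.closure {g : GL (Fin 2) K | g ∈ G ∧ IsPseudoreflection g} := fun i => by
    by_cases hi : d i = 1
    · simp [hi]
    · exact Subgroup.subset_closure ⟨hd i, isPseudoreflection_diagonalUnits_mulSingle i hi⟩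
  rw [← Finset.univ_prod_mulSingle d, Fin.prod_univ_two, map_mul]
  exact Subgroup.mul_mem _ (hmem 0) (hmem 1)

lemma powMonoidHom_ker_le_comap_diagonalUnits {K ι P : Type*} [Field K] [Fintype ι]
    [DecidableEq ι] [CommGroup P] {G : Subgroup (GL ι K)}
    (hG : G ≤ (Matrix.diagonalUnits ι K).range) (e : G ≃* P) (n : ℕ) [NeZero n]
    [HasEnoughRootsOfUnity K n] (hP : Nat.card (powMonoidHom n : P →* P).ker = n ^ Fintype.card ι) :
    (powMonoidHom n : (ι → Kˣ) →* (ι → Kˣ)).ker ≤ G.comap (Matrix.diagonalUnits ι K) := by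
  have hcard := card_powMonoidHom_ker_units_pi K ι n
  have : Finite (powMonoidHom n : (ι → Kˣ) →* (ι → Kˣ)).ker :=
    Nat.finite_of_card_ne_zero (hcard ▸ pow_ne_zero _ (NeZero.ne n))
  refine powMonoidHom_ker_le_of_card_eq _ n ?_
  rw [(((G.comap _).equivMapOfInjective _ Matrix.diagonalUnits_injective).trans
    ((MulEquiv.subgroupCongr (G.map_comap_eq_self hG)).trans e)).card_powMonoidHom_ker, hP, hcard]

lemma map_powMonoidHom_ker_le_closure_pseudoreflection {K : Type*} [Field K]
    {G : Subgroup (GL (Fin 2) K)} {n : ℕ}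
    (hG : (powMonoidHom n : (Fin 2 → Kˣ) →* (Fin 2 → Kˣ)).ker ≤
      G.comap (Matrix.diagonalUnits (Fin 2) K)) :
    (powMonoidHom n : (Fin 2 → Kˣ) →* (Fin 2 → Kˣ)).ker.map (Matrix.diagonalUnits (Fin 2) K) ≤
      Subgroup.closure {g : GL (Fin 2) K | g ∈ G ∧ IsPseudoreflection g} := by
  rintro _ ⟨d, hd, rfl⟩
  refine diagonalUnits_mem_closure_pseudoreflection G fun i => hG ?_
  replace hd : d ^ n = 1 := hd
  show (Pi.mulSingle i (d i) : Fin 2 → Kˣ) ^ n = 1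
  rw [← Pi.mulSingle_pow, ← Pi.pow_apply, hd, Pi.one_apply, Pi.mulSingle_one]

theorem stmt18_general {K : Type*} [Field K] [IsAlgClosed K] [CharZero K]
    (G : Subgroup (GL (Fin 2) K))
    (hdiag : ∀ g ∈ G, ∀ i j : Fin 2, i ≠ j → (g : Matrix (Fin 2) (Fin 2) K) i j = 0)
    (a b : ℕ) (ha : 0 < a) (hb : 0 < b)
    (hiso : Nonempty (G ≃* Multiplicative (ZMod a) × Multiplicative (ZMod (a * b)))) :
    (∀ g ∈ G, g ^ a = 1 →
        g ∈ Subgroup.closure {g : GL (Fin 2) K | g ∈ G ∧ IsPseudoreflection g}) ∧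
      (Subgroup.closure {g : GL (Fin 2) K | g ∈ G ∧ IsPseudoreflection g}).relIndex G ∣ b := by
  obtain ⟨e⟩ := hiso
  have : NeZero a := ⟨ha.ne'⟩
  have : NeZero (a * b) := ⟨(Nat.mul_pos ha hb).ne'⟩
  have : NeZero (a : K) := ⟨Nat.cast_ne_zero.mpr ha.ne'⟩
  set f := Matrix.diagonalUnits (Fin 2) K
  set T := (powMonoidHom a : (Fin 2 → Kˣ) →* (Fin 2 → Kˣ)).ker
  have hGf : G ≤ f.range := fun g hg => Matrix.mem_range_diagonalUnits (hdiag g hg)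
  have hTG : T ≤ G.comap f := powMonoidHom_ker_le_comap_diagonalUnits hGf e a <| by
    rw [card_powMonoidHom_ker_prod, card_powMonoidHom_ker_zmod, card_powMonoidHom_ker_zmod,
      Nat.gcd_self, Nat.gcd_mul_right_left, Fintype.card_fin, sq]
  have hTS := map_powMonoidHom_ker_le_closure_pseudoreflection hTG
  refine ⟨fun g hg hga => hTS ?_, ?_⟩
  · obtain ⟨d, rfl⟩ := hGf hg
    exact ⟨d, Matrix.diagonalUnits_injective (by simpa using hga), rfl⟩
  · have hindex := Subgroup.relIndex_mul_relIndex ⊥ (T.map f) G bot_le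
      ((Subgroup.map_mono hTG).trans (Subgroup.map_comap_le _ _))
    rw [Subgroup.relIndex_bot_left, Subgroup.relIndex_bot_left,
      Subgroup.card_map_of_injective Matrix.diagonalUnits_injective,
      card_powMonoidHom_ker_units_pi, Fintype.card_fin, sq,
      Nat.card_congr e.toEquiv, Nat.card_prod, Nat.card_congr Multiplicative.toAdd,
      Nat.card_congr Multiplicative.toAdd, Nat.card_zmod, Nat.card_zmod, ← mul_assoc] at hindex
    rw [← Nat.eq_of_mul_eq_mul_left (Nat.mul_pos ha ha) hindex]
    exact Subgroup.relIndex_dvd_of_le_left G hTS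

theorem stmt18 {K : Type*} [Field K] [IsAlgClosed K] [CharZero K]
    (G : Subgroup (GL (Fin 2) K)) [Finite G]
    (hdiag : ∀ g ∈ G, ∀ i j : Fin 2, i ≠ j → (g : Matrix (Fin 2) (Fin 2) K) i j = 0)
    (a b : ℕ) (ha : 0 < a) (hb : 0 < b)
    (hiso : Nonempty (G ≃* Multiplicative (ZMod a) × Multiplicative (ZMod (a * b)))) :
    (∀ g ∈ G, g ^ a = 1 →
        g ∈ Subgroup.closure {g : GL (Fin 2) K | g ∈ G ∧ IsPseudoreflection g}) ∧
      (Subgroup.closure {g : GL (Fin 2) K | g ∈ G ∧ IsPseudoreflection g}).relIndex G ∣ b :=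
  stmt18_general G hdiag a b ha hb hiso
end
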